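/- The Okubo product composes with the norm: let F be a field of characteristic ≠ 2, 3 and let μ ∈ F satisfy 3μ(1−μ) = 1. For trace-zero 3×3 matrices x, y over F, define x∗y = μ·(xy) + (1−μ)·(yx) − (1/3)·tr(xy)·I. Then tr(x∗y) = 0 (so ∗ is a product on the space of trace-zero matrices), and n(x∗y) = n(x)·n(y), where n(x) = (1/6)·tr(x²). -/

import Mathlib

open Matrix

/-- The Okubo product on trace-zero `3×3` matrices:
`x∗y = μ·(xy) + (1−μ)·(yx) − (1/3)·tr(xy)·I`. -/
def okuboMul {F : Type*} [Field F] (μ : F) (x y : Matrix (Fin 3) (Fin 3) F) :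
    Matrix (Fin 3) (Fin 3) F :=
  μ • (x * y) + (1 - μ) • (y * x) - ((1 / 3 : F) * Matrix.trace (x * y)) • (1 : Matrix (Fin 3) (Fin 3) F)

/-- The Okubo norm `n(x) = (1/6)·tr(x²)`. -/
def okuboNorm {F : Type*} [Field F] (x : Matrix (Fin 3) (Fin 3) F) : F :=
  (1 / 6 : F) * Matrix.trace (x * x)

/-- Fundamental trace identity for trace-zero `3×3` matrices. -/
lemma okubo_trace_key {F : Type*} [Field F] (x y : Matrix (Fin 3) (Fin 3) F)
    (hx : Matrix.trace x = 0) (hy : Matrix.trace y = 0) :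
    2 * Matrix.trace (x * y * (x * y)) + 4 * Matrix.trace (x * x * (y * y))
      = 2 * (Matrix.trace (x * y)) ^ 2 + Matrix.trace (x * x) * Matrix.trace (y * y) := by
  simp only [Matrix.trace, Matrix.diag, Matrix.mul_apply, Fin.sum_univ_three] at hx hy ⊢
  have hx' : x 2 2 = -(x 0 0) - x 1 1 := by linear_combination hx
  have hy' : y 2 2 = -(y 0 0) - y 1 1 := by linear_combination hy
  rw [hx', hy']
  ring

lemma okubo_trace_cyc {F : Type*} [Field F] (x y : Matrix (Fin 3) (Fin 3) F) :
    Matrix.trace (x * y * (y * x)) = Matrix.trace (x * x * (y * y)) ∧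
    Matrix.trace (y * x * (x * y)) = Matrix.trace (x * x * (y * y)) ∧
    Matrix.trace (y * x * (y * x)) = Matrix.trace (x * y * (x * y)) ∧
    Matrix.trace (y * x) = Matrix.trace (x * y) := by
  refine ⟨?_, ?_, ?_, ?_⟩ <;>
    · simp only [Matrix.trace, Matrix.diag, Matrix.mul_apply, Fin.sum_univ_three]
      ring

/-- The Okubo product of trace-zero matrices has trace zero, and the Okubo norm
is multiplicative: `n(x∗y) = n(x)·n(y)`. -/
theorem okubo_norm_multiplicative {F : Type*} [Field F]
    (h2 : ringChar F ≠ 2) (h3 : ringChar F ≠ 3)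
    (μ : F) (hμ : 3 * (μ * (1 - μ)) = 1)
    (x y : Matrix (Fin 3) (Fin 3) F)
    (hx : Matrix.trace x = 0) (hy : Matrix.trace y = 0) :
    Matrix.trace (okuboMul μ x y) = 0 ∧
    okuboNorm (okuboMul μ x y) = okuboNorm x * okuboNorm y := by
  have h3' : (3 : F) ≠ 0 := by
    intro h; rw [h, zero_mul] at hμ; exact one_ne_zero hμ.symm
  obtain ⟨e1, e2, e3, e4⟩ := okubo_trace_cyc x y
  have key := okubo_trace_key x y hx hy
  have htr1 : Matrix.trace (1 : Matrix (Fin 3) (Fin 3) F) = 3 := by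
    simp [Matrix.trace_one]
  constructor
  · simp only [okuboMul, Matrix.trace_sub, Matrix.trace_add, Matrix.trace_smul, smul_eq_mul,
      htr1, e4]
    field_simp
    ring
  · simp only [okuboNorm, okuboMul]
    rw [show (μ • (x * y) + (1 - μ) • (y * x) - ((1 / 3 : F) * Matrix.trace (x * y)) • (1 : Matrix (Fin 3) (Fin 3) F)) *
        (μ • (x * y) + (1 - μ) • (y * x) - ((1 / 3 : F) * Matrix.trace (x * y)) • (1 : Matrix (Fin 3) (Fin 3) F))
      = (μ * μ) • (x * y * (x * y)) + (μ * (1 - μ)) • (x * y * (y * x))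
        + ((1 - μ) * μ) • (y * x * (x * y)) + ((1 - μ) * (1 - μ)) • (y * x * (y * x))
        - (μ * ((1 / 3 : F) * Matrix.trace (x * y)) * 2) • (x * y)
        - ((1 - μ) * ((1 / 3 : F) * Matrix.trace (x * y)) * 2) • (y * x)
        + (((1 / 3 : F) * Matrix.trace (x * y)) * ((1 / 3 : F) * Matrix.trace (x * y))) • (1 : Matrix (Fin 3) (Fin 3) F)
      from by
        simp only [sub_mul, mul_sub, add_mul, mul_add, smul_mul_assoc, mul_smul_comm,
          smul_smul, Matrix.one_mul, Matrix.mul_one]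
        match_scalars <;> ring]
    simp only [Matrix.trace_add, Matrix.trace_sub, Matrix.trace_smul, smul_eq_mul, htr1,
      e1, e2, e3, e4]
    have h2' : (2 : F) ≠ 0 := Ring.two_ne_zero h2
    have h6 : (6 : F) ≠ 0 := by
      have : (6:F) = 2*3 := by norm_num
      rw [this]; exact mul_ne_zero h2' h3'
    field_simp
    linear_combination (3 : F) * key
      + ((12 : F) * (Matrix.trace (x * x * (y * y)) - Matrix.trace (x * y * (x * y)))) * hμ
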